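/- Let A and B be m×n complex matrices and E = B − A. Define β₁ := ‖A†‖₂⁴(‖E‖_F² − ‖EB†B‖_F²) + ‖B†‖₂⁴(‖E‖_F² − ‖AA†E‖_F²) and β₂ := ‖A†‖₂⁴(‖E‖_F² − ‖BB†E‖_F²) + ‖B†‖₂⁴(‖E‖_F² − ‖EA†A‖_F²). Then ‖B† − A†‖_F² ≤ min{β₁ + ‖B†EA†‖_F², β₂ + ‖A†EB†‖_F²}. -/

import Mathlib

open Matrix

/-- The square of the Frobenius norm of a complex matrix. -/
noncomputable def frobSq {α β : Type*} [Fintype α] [Fintype β] (M : Matrix α β ℂ) : ℝ :=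
  ∑ i, ∑ j, ‖M i j‖ ^ 2

/-- The spectral norm (ℓ²-operator norm) of a complex matrix. -/
noncomputable def spec {α β : Type*} [Fintype α] [Fintype β] [DecidableEq β]
    (M : Matrix α β ℂ) : ℝ :=
  ‖LinearMap.toContinuousLinearMap (Matrix.toEuclideanLin M)‖

/-- `X` is the Moore–Penrose inverse of `M` (the four Penrose equations). -/
def IsMoorePenrose {α β : Type*} [Fintype α] [Fintype β]
    (M : Matrix α β ℂ) (X : Matrix β α ℂ) : Prop :=
  M * X * M = M ∧ X * M * X = X ∧ (M * X)ᴴ = M * X ∧ (X * M)ᴴ = X * M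

open scoped Matrix.Norms.L2Operator

/-!
With the orthogonal projections `P = B†B` and `Q = AA†`, the four blocks `P D Q`, `P D (1 - Q)`,
`(1 - P) D Q`, `(1 - P) D (1 - Q)` of `D = B† - A†` are mutually orthogonal, so their squared
Frobenius norms add up. The Penrose equations identify the blocks as `-B† E A†`,
`B† B†ᴴ ((1 - Q) E)ᴴ`, `(E (1 - P))ᴴ A†ᴴ A†` and `0`. Since `‖N Nᴴ‖₂ = ‖N‖₂²` and
`‖N M‖_F ≤ ‖N‖₂ ‖M‖_F`, the middle two are bounded by `‖B†‖₂⁴ ‖(1 - Q) E‖_F²` and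
`‖A†‖₂⁴ ‖E (1 - P)‖_F²`, and Pythagoras once more gives `‖(1 - Q) E‖_F² = ‖E‖_F² - ‖Q E‖_F²`.
The second bound is the first one with the roles of `A` and `B` exchanged.
-/

section Frobenius

variable {α β γ : Type*} [Fintype α] [Fintype β] [Fintype γ]

lemma frobSq_eq_re_trace (M : Matrix α β ℂ) : frobSq M = (trace (Mᴴ * M)).re := by
  simp only [frobSq, trace, diag, mul_apply, conjTranspose_apply, Complex.re_sum,
    RCLike.star_def, Complex.conj_mul', ← Complex.ofReal_pow, Complex.ofReal_re]
  exact Finset.sum_comm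

lemma frobSq_zero : frobSq (0 : Matrix α β ℂ) = 0 := by
  simp [frobSq]

lemma frobSq_neg (M : Matrix α β ℂ) : frobSq (-M) = frobSq M := by
  simp [frobSq]

lemma frobSq_conjTranspose (M : Matrix α β ℂ) : frobSq Mᴴ = frobSq M := by
  simp only [frobSq, conjTranspose_apply, norm_star]
  exact Finset.sum_comm

lemma frobSq_add_of_conjTranspose_mul_eq_zero {X Y : Matrix α β ℂ} (h : Xᴴ * Y = 0) :
    frobSq (X + Y) = frobSq X + frobSq Y := by
  have h' : Yᴴ * X = 0 := by
    rw [← conjTranspose_conjTranspose (Yᴴ * X), conjTranspose_mul, conjTranspose_conjTranspose, h,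
      conjTranspose_zero]
  simp only [frobSq_eq_re_trace, conjTranspose_add, Matrix.add_mul, Matrix.mul_add, trace_add, h,
    h', trace_zero, Complex.add_re, Complex.zero_re]
  ring

lemma frobSq_eq_sum_norm_sq_col (M : Matrix α β ℂ) :
    frobSq M = ∑ j, ‖(WithLp.toLp 2 (Mᵀ j) : EuclideanSpace ℂ α)‖ ^ 2 := by
  simp only [frobSq, EuclideanSpace.norm_sq_eq, transpose_apply]
  exact Finset.sum_comm

lemma frobSq_mul_le [DecidableEq β] (N : Matrix α β ℂ) (M : Matrix β γ ℂ) :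
    frobSq (N * M) ≤ spec N ^ 2 * frobSq M := by
  rw [frobSq_eq_sum_norm_sq_col, frobSq_eq_sum_norm_sq_col, Finset.mul_sum]
  refine Finset.sum_le_sum fun j _ => ?_
  have hcol : (N * M)ᵀ j = N *ᵥ Mᵀ j := by
    ext i; simp [mul_apply, mulVec, dotProduct]
  rw [hcol, ← mul_pow]
  exact pow_le_pow_left₀ (norm_nonneg _) (N.l2_opNorm_mulVec (WithLp.toLp 2 (Mᵀ j))) 2

lemma spec_conjTranspose [DecidableEq α] [DecidableEq β] (N : Matrix α β ℂ) :
    spec Nᴴ = spec N :=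
  l2_opNorm_conjTranspose N

lemma spec_conjTranspose_mul_self [DecidableEq β] (N : Matrix α β ℂ) :
    spec (Nᴴ * N) = spec N ^ 2 :=
  (l2_opNorm_conjTranspose_mul_self N).trans (sq _).symm

lemma spec_mul_conjTranspose_self [DecidableEq α] [DecidableEq β] (N : Matrix α β ℂ) :
    spec (N * Nᴴ) = spec N ^ 2 := by
  simpa [spec_conjTranspose] using spec_conjTranspose_mul_self Nᴴ

lemma frobSq_mul_le_right [DecidableEq β] [DecidableEq γ] (M : Matrix α β ℂ)
    (N : Matrix β γ ℂ) : frobSq (M * N) ≤ spec N ^ 2 * frobSq M := by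
  rw [← frobSq_conjTranspose (M * N), conjTranspose_mul, ← frobSq_conjTranspose M,
    ← spec_conjTranspose N]
  exact frobSq_mul_le Nᴴ Mᴴ

lemma frobSq_mul_conjTranspose_mul_le [DecidableEq α] [DecidableEq β] (N : Matrix α β ℂ)
    (R : Matrix α γ ℂ) : frobSq (N * Nᴴ * R) ≤ spec N ^ 4 * frobSq R := by
  simpa only [spec_mul_conjTranspose_self, ← pow_mul] using frobSq_mul_le (N * Nᴴ) R

lemma frobSq_mul_conjTranspose_mul_le_right [DecidableEq β] (N : Matrix α β ℂ)
    (R : Matrix γ β ℂ) : frobSq (R * Nᴴ * N) ≤ spec N ^ 4 * frobSq R := by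
  simpa only [Matrix.mul_assoc, spec_conjTranspose_mul_self, ← pow_mul]
    using frobSq_mul_le_right R (Nᴴ * N)

lemma frobSq_eq_add_of_isStarProjection_left [DecidableEq α] {P : Matrix α α ℂ}
    (hP : IsStarProjection P) (M : Matrix α β ℂ) :
    frobSq M = frobSq (P * M) + frobSq ((1 - P) * M) := by
  have horth : (P * M)ᴴ * ((1 - P) * M) = 0 := by
    rw [conjTranspose_mul, hP.isSelfAdjoint.isHermitian.eq, Matrix.mul_assoc,
      ← Matrix.mul_assoc P, hP.mul_one_sub_self, Matrix.zero_mul, Matrix.mul_zero]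
  rw [← frobSq_add_of_conjTranspose_mul_eq_zero horth, ← Matrix.add_mul, add_sub_cancel,
    Matrix.one_mul]

lemma frobSq_eq_add_of_isStarProjection_right [DecidableEq β] {Q : Matrix β β ℂ}
    (hQ : IsStarProjection Q) (M : Matrix α β ℂ) :
    frobSq M = frobSq (M * Q) + frobSq (M * (1 - Q)) := by
  rw [← frobSq_conjTranspose M, ← frobSq_conjTranspose (M * Q), ← frobSq_conjTranspose (M * _),
    conjTranspose_mul, conjTranspose_mul, hQ.isSelfAdjoint.isHermitian.eq,
    hQ.one_sub.isSelfAdjoint.isHermitian.eq]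
  exact frobSq_eq_add_of_isStarProjection_left hQ Mᴴ

lemma frobSq_eq_add_four_blocks [DecidableEq α] [DecidableEq β] {P : Matrix α α ℂ}
    {Q : Matrix β β ℂ} (hP : IsStarProjection P) (hQ : IsStarProjection Q) (D : Matrix α β ℂ) :
    frobSq D = frobSq (P * D * Q) + frobSq (P * D * (1 - Q)) + frobSq ((1 - P) * D * Q)
      + frobSq ((1 - P) * D * (1 - Q)) := by
  rw [frobSq_eq_add_of_isStarProjection_left hP D,
    frobSq_eq_add_of_isStarProjection_right hQ (P * D),
    frobSq_eq_add_of_isStarProjection_right hQ ((1 - P) * D)]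
  ring

end Frobenius

namespace IsMoorePenrose

variable {α β : Type*} [Fintype α] [Fintype β] {M : Matrix α β ℂ} {X : Matrix β α ℂ}

lemma isStarProjection_mul_pinv (h : IsMoorePenrose M X) : IsStarProjection (M * X) :=
  ⟨by rw [IsIdempotentElem, ← Matrix.mul_assoc, h.1], h.2.2.1⟩

lemma isStarProjection_pinv_mul (h : IsMoorePenrose M X) : IsStarProjection (X * M) :=
  ⟨by rw [IsIdempotentElem, ← Matrix.mul_assoc, h.2.1], h.2.2.2⟩

lemma pinv_mul_one_sub_mul_pinv [DecidableEq α] (h : IsMoorePenrose M X) :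
    X * (1 - M * X) = 0 := by
  rw [Matrix.mul_sub, Matrix.mul_one, ← Matrix.mul_assoc, h.2.1, sub_self]

lemma one_sub_pinv_mul_mul_pinv [DecidableEq β] (h : IsMoorePenrose M X) :
    (1 - X * M) * X = 0 := by
  rw [Matrix.sub_mul, Matrix.one_mul, h.2.1, sub_self]

lemma conjTranspose_mul_one_sub_mul_pinv [DecidableEq α] (h : IsMoorePenrose M X) :
    Mᴴ * (1 - M * X) = 0 := by
  rw [Matrix.mul_sub, Matrix.mul_one, ← h.2.2.1, ← conjTranspose_mul, h.1, sub_self]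

lemma one_sub_pinv_mul_mul_conjTranspose [DecidableEq β] (h : IsMoorePenrose M X) :
    (1 - X * M) * Mᴴ = 0 := by
  rw [Matrix.sub_mul, Matrix.one_mul, ← h.2.2.2, ← conjTranspose_mul, ← Matrix.mul_assoc, h.1,
    sub_self]

lemma pinv_mul_conjTranspose_mul_conjTranspose (h : IsMoorePenrose M X) :
    X * Xᴴ * Mᴴ = X := by
  rw [Matrix.mul_assoc, ← conjTranspose_mul, h.2.2.1, ← Matrix.mul_assoc, h.2.1]

lemma conjTranspose_mul_conjTranspose_pinv_mul_pinv (h : IsMoorePenrose M X) :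
    Mᴴ * Xᴴ * X = X := by
  rw [← conjTranspose_mul, h.2.2.2, h.2.1]

end IsMoorePenrose

section Perturbation

variable {α β : Type*} [Fintype α] [Fintype β] {A B : Matrix α β ℂ} {A' B' : Matrix β α ℂ}

lemma pinv_sub_pinv_proj_proj (hA : IsMoorePenrose A A') (hB : IsMoorePenrose B B') :
    B' * B * (B' - A') * (A * A') = -(B' * (B - A) * A') := by
  calc B' * B * (B' - A') * (A * A') = B' * B * B' * (A * A') - B' * B * (A' * A * A') := by
        simp only [Matrix.mul_sub, Matrix.sub_mul, Matrix.mul_assoc]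
    _ = -(B' * (B - A) * A') := by
        rw [hB.2.1, hA.2.1]
        simp only [Matrix.mul_sub, Matrix.sub_mul, Matrix.mul_assoc]
        abel

lemma pinv_sub_pinv_proj_compl [DecidableEq α] (hA : IsMoorePenrose A A')
    (hB : IsMoorePenrose B B') :
    B' * B * (B' - A') * (1 - A * A') = B' * B'ᴴ * ((1 - A * A') * (B - A))ᴴ := by
  calc B' * B * (B' - A') * (1 - A * A')
        = B' * B * B' * (1 - A * A') - B' * B * (A' * (1 - A * A')) := by
        simp only [Matrix.mul_sub, Matrix.sub_mul, Matrix.mul_assoc]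
        abel
    _ = B' * B'ᴴ * Bᴴ * (1 - A * A') - B' * B'ᴴ * (Aᴴ * (1 - A * A')) := by
        rw [hB.2.1, hA.pinv_mul_one_sub_mul_pinv, hA.conjTranspose_mul_one_sub_mul_pinv,
          hB.pinv_mul_conjTranspose_mul_conjTranspose, Matrix.mul_zero, Matrix.mul_zero]
    _ = B' * B'ᴴ * ((1 - A * A') * (B - A))ᴴ := by
        rw [conjTranspose_mul, hA.isStarProjection_mul_pinv.one_sub.isSelfAdjoint.isHermitian.eq,
          conjTranspose_sub]
        simp only [Matrix.mul_sub, Matrix.sub_mul, Matrix.mul_assoc]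
        abel

lemma pinv_sub_pinv_compl_proj [DecidableEq β] (hA : IsMoorePenrose A A')
    (hB : IsMoorePenrose B B') :
    (1 - B' * B) * (B' - A') * (A * A') = ((B - A) * (1 - B' * B))ᴴ * A'ᴴ * A' := by
  calc (1 - B' * B) * (B' - A') * (A * A')
        = (1 - B' * B) * B' * (A * A') - (1 - B' * B) * (A' * A * A') := by
        simp only [Matrix.mul_sub, Matrix.sub_mul, Matrix.mul_assoc]
    _ = (1 - B' * B) * Bᴴ * A'ᴴ * A' - (1 - B' * B) * (Aᴴ * A'ᴴ * A') := by
        rw [hB.one_sub_pinv_mul_mul_pinv, hB.one_sub_pinv_mul_mul_conjTranspose, hA.2.1,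
          hA.conjTranspose_mul_conjTranspose_pinv_mul_pinv, Matrix.zero_mul, Matrix.zero_mul,
          Matrix.zero_mul]
    _ = ((B - A) * (1 - B' * B))ᴴ * A'ᴴ * A' := by
        rw [conjTranspose_mul, hB.isStarProjection_pinv_mul.one_sub.isSelfAdjoint.isHermitian.eq,
          conjTranspose_sub]
        simp only [Matrix.mul_sub, Matrix.sub_mul, Matrix.mul_assoc]

lemma pinv_sub_pinv_compl_compl [DecidableEq α] [DecidableEq β] (hA : IsMoorePenrose A A')
    (hB : IsMoorePenrose B B') : (1 - B' * B) * (B' - A') * (1 - A * A') = 0 := by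
  rw [Matrix.mul_sub (1 - B' * B) B' A', Matrix.sub_mul, hB.one_sub_pinv_mul_mul_pinv,
    Matrix.zero_mul, Matrix.mul_assoc, hA.pinv_mul_one_sub_mul_pinv, Matrix.mul_zero, sub_zero]

end Perturbation

lemma frobSq_pinv_sub_pinv_le {α β : Type*} [Fintype α] [Fintype β] [DecidableEq α]
    [DecidableEq β] {A B : Matrix α β ℂ} {A' B' : Matrix β α ℂ} (hA : IsMoorePenrose A A')
    (hB : IsMoorePenrose B B') :
    frobSq (B' - A') ≤
      spec A' ^ 4 * (frobSq (B - A) - frobSq ((B - A) * B' * B))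
        + spec B' ^ 4 * (frobSq (B - A) - frobSq (A * A' * (B - A)))
        + frobSq (B' * (B - A) * A') := by
  have hP := hB.isStarProjection_pinv_mul
  have hQ := hA.isStarProjection_mul_pinv
  have h_proj_compl : frobSq (B' * B * (B' - A') * (1 - A * A'))
      ≤ spec B' ^ 4 * (frobSq (B - A) - frobSq (A * A' * (B - A))) := by
    rw [pinv_sub_pinv_proj_compl hA hB, frobSq_eq_add_of_isStarProjection_left hQ (B - A),
      ← frobSq_conjTranspose ((1 - A * A') * (B - A)), add_sub_cancel_left]
    exact frobSq_mul_conjTranspose_mul_le B' _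
  have h_compl_proj : frobSq ((1 - B' * B) * (B' - A') * (A * A'))
      ≤ spec A' ^ 4 * (frobSq (B - A) - frobSq ((B - A) * B' * B)) := by
    rw [pinv_sub_pinv_compl_proj hA hB, frobSq_eq_add_of_isStarProjection_right hP (B - A),
      ← Matrix.mul_assoc, ← frobSq_conjTranspose ((B - A) * (1 - B' * B)), add_sub_cancel_left]
    exact frobSq_mul_conjTranspose_mul_le_right A' _
  rw [frobSq_eq_add_four_blocks hP hQ (B' - A'), pinv_sub_pinv_proj_proj hA hB,
    pinv_sub_pinv_compl_compl hA hB, frobSq_neg, frobSq_zero]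
  linarith

theorem stmt3 {m n : ℕ}
    (A B : Matrix (Fin m) (Fin n) ℂ)
    (Adag Bdag : Matrix (Fin n) (Fin m) ℂ)
    (hA : IsMoorePenrose A Adag) (hB : IsMoorePenrose B Bdag)
    (E : Matrix (Fin m) (Fin n) ℂ) (hE : E = B - A)
    :
    frobSq (Bdag - Adag) ≤
      min
        (spec Adag ^ 4 * (frobSq E - frobSq (E * Bdag * B))
          + spec Bdag ^ 4 * (frobSq E - frobSq (A * Adag * E))
          + frobSq (Bdag * E * Adag))
        (spec Adag ^ 4 * (frobSq E - frobSq (B * Bdag * E))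
          + spec Bdag ^ 4 * (frobSq E - frobSq (E * Adag * A))
          + frobSq (Adag * E * Bdag)) := by
  subst hE
  refine le_min (frobSq_pinv_sub_pinv_le hA hB) ?_
  have h := frobSq_pinv_sub_pinv_le hB hA
  rw [← neg_sub B A, ← neg_sub Bdag Adag] at h
  simp only [Matrix.neg_mul, Matrix.mul_neg, frobSq_neg] at h
  linarith
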